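/- Let u(x,t) = ε²A(ε(x−t), ε³t) where A solves the KdV equation ∂_T A = (1/2)∂_X³A − (1/2)∂_X(A²). Then the residual Res(u) := −∂_t²u + ∂_x²u − ∂_x⁴u + ∂_x²(u²) equals −ε⁸·(∂_T²A)(ε(x−t), ε³t). -/

import Mathlib

/-- Partial derivative with respect to the first (spatial) variable. -/
noncomputable def pX (f : ℝ → ℝ → ℝ) : ℝ → ℝ → ℝ := fun x t => deriv (fun y => f y t) x

/-- Partial derivative with respect to the second (temporal) variable. -/
noncomputable def pT (f : ℝ → ℝ → ℝ) : ℝ → ℝ → ℝ := fun x t => deriv (fun s => f x s) t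

/-- The residual of the (constant-coefficient) Boussinesq equation:
`Res(u) = -∂_t²u + ∂_x²u - ∂_x⁴u + ∂_x²(u²)`. -/
noncomputable def Res (u : ℝ → ℝ → ℝ) : ℝ → ℝ → ℝ := fun x t =>
  -(pT (pT u) x t) + pX (pX u) x t - pX (pX (pX (pX u))) x t
    + pX (pX (fun y s => (u y s)^2)) x t

noncomputable def dv (v : ℝ × ℝ) (H : ℝ × ℝ → ℝ) : ℝ × ℝ → ℝ := fun p => fderiv ℝ H p v

lemma smooth_dv (v : ℝ × ℝ) {H : ℝ × ℝ → ℝ} (hH : ContDiff ℝ (⊤ : ℕ∞) H) :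
    ContDiff ℝ (⊤ : ℕ∞) (dv v H) :=
  (hH.fderiv_right (by simp)).clm_apply contDiff_const

lemma expandL (L : ℝ × ℝ →L[ℝ] ℝ) (c d : ℝ) : L (c, d) = c * L (1,0) + d * L (0,1) := by
  have h : (c, d) = c • ((1:ℝ), (0:ℝ)) + d • ((0:ℝ), (1:ℝ)) := by simp
  rw [h, map_add, map_smul, map_smul, smul_eq_mul, smul_eq_mul]

lemma hasDeriv_fst {H : ℝ × ℝ → ℝ} (hH : Differentiable ℝ H) (a b : ℝ) :
    HasDerivAt (fun y => H (y, b)) (dv (1,0) H (a, b)) a := by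
  simpa [dv, Function.comp_def] using ((hH (a,b)).hasFDerivAt.comp_hasDerivAt a
    ((hasDerivAt_id a).prodMk (hasDerivAt_const a b)))

lemma hasDeriv_snd {H : ℝ × ℝ → ℝ} (hH : Differentiable ℝ H) (a b : ℝ) :
    HasDerivAt (fun s => H (a, s)) (dv (0,1) H (a, b)) b := by
  simpa [dv, Function.comp_def] using ((hH (a,b)).hasFDerivAt.comp_hasDerivAt b
    ((hasDerivAt_const b a).prodMk (hasDerivAt_id b)))

lemma hasDeriv_chainX {H : ℝ × ℝ → ℝ} (hH : Differentiable ℝ H) (ε x t : ℝ) :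
    HasDerivAt (fun y => H (ε*(y - t), ε^3*t)) (dv (ε, 0) H (ε*(x-t), ε^3*t)) x := by
  have hcurve : HasDerivAt (fun y : ℝ => ((ε*(y - t) : ℝ), (ε^3*t : ℝ)))
      ((ε, 0) : ℝ × ℝ) x := by
    have h1 : HasDerivAt (fun y : ℝ => ε*(y - t)) ε x := by
      simpa using (((hasDerivAt_id x).sub_const t).const_mul ε)
    exact h1.prodMk (hasDerivAt_const x (ε^3*t))
  simpa [dv, Function.comp_def] using ((hH _).hasFDerivAt.comp_hasDerivAt x hcurve)

lemma hasDeriv_chainT {H : ℝ × ℝ → ℝ} (hH : Differentiable ℝ H) (ε x t : ℝ) :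
    HasDerivAt (fun s => H (ε*(x - s), ε^3*s)) (dv (-ε, ε^3) H (ε*(x-t), ε^3*t)) t := by
  have hcurve : HasDerivAt (fun s : ℝ => ((ε*(x - s) : ℝ), (ε^3*s : ℝ)))
      ((-ε, ε^3) : ℝ × ℝ) t := by
    have h1 : HasDerivAt (fun s : ℝ => ε*(x - s)) (-ε) t := by
      simpa using (((hasDerivAt_id t).const_sub x).const_mul ε)
    have h2 : HasDerivAt (fun s : ℝ => ε^3*s) (ε^3) t := by
      simpa using ((hasDerivAt_id t).const_mul (ε^3))
    exact h1.prodMk h2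
  simpa [dv, Function.comp_def] using ((hH _).hasFDerivAt.comp_hasDerivAt t hcurve)

lemma dv_cmul {H : ℝ × ℝ → ℝ} (hH : Differentiable ℝ H) (c : ℝ) (v p) :
    dv v (fun q => c * H q) p = c * dv v H p := by
  unfold dv
  rw [fderiv_const_mul (hH p) c]
  simp

lemma dv_combo {H1 H2 : ℝ × ℝ → ℝ} (h1 : Differentiable ℝ H1) (h2 : Differentiable ℝ H2)
    (c1 c2 : ℝ) (v p) :
    dv v (fun q => c1 * H1 q + c2 * H2 q) p = c1 * dv v H1 p + c2 * dv v H2 p := by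
  unfold dv
  rw [fderiv_fun_add ((h1 p).const_mul c1) ((h2 p).const_mul c2),
    fderiv_const_mul (h1 p) c1, fderiv_const_mul (h2 p) c2]
  simp

lemma dv_expand {H : ℝ × ℝ → ℝ} (c d : ℝ) (p) :
    dv (c, d) H p = c * dv (1,0) H p + d * dv (0,1) H p := expandL _ c d

lemma dv_symm {H : ℝ × ℝ → ℝ} (hH : ContDiff ℝ (⊤ : ℕ∞) H) (p) :
    dv (0,1) (dv (1,0) H) p = dv (1,0) (dv (0,1) H) p := by
  have hsymm : IsSymmSndFDerivAt ℝ H p :=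
    hH.contDiffAt.isSymmSndFDerivAt (by rw [minSmoothness_of_isRCLikeNormedField]; exact WithTop.coe_le_coe.mpr le_top)
  have hdf : DifferentiableAt ℝ (fderiv ℝ H) p :=
    ((hH.fderiv_right (m := (⊤ : ℕ∞)) (by simp)).differentiable (by simp)) p
  have key : ∀ v w : ℝ × ℝ, dv w (dv v H) p = fderiv ℝ (fderiv ℝ H) p w v := by
    intro v w
    unfold dv
    rw [fderiv_clm_apply hdf (differentiableAt_const v)]
    simp
  rw [key, key, hsymm (0,1) (1,0)]

/-- pX of a curried function equals dv (1,0). -/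
lemma pX_eq {H : ℝ × ℝ → ℝ} (hH : Differentiable ℝ H) (x t : ℝ) :
    pX (fun a b => H (a,b)) x t = dv (1,0) H (x,t) :=
  (hasDeriv_fst hH x t).deriv

lemma pT_eq {H : ℝ × ℝ → ℝ} (hH : Differentiable ℝ H) (x t : ℝ) :
    pT (fun a b => H (a,b)) x t = dv (0,1) H (x,t) :=
  (hasDeriv_snd hH x t).deriv

lemma compX (ε : ℝ) {H : ℝ × ℝ → ℝ} (hH : Differentiable ℝ H) :
    pX (fun x t => H (ε*(x-t), ε^3*t)) = fun x t => dv (ε,0) H (ε*(x-t), ε^3*t) :=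
  funext fun x => funext fun t => (hasDeriv_chainX hH ε x t).deriv

lemma compT (ε : ℝ) {H : ℝ × ℝ → ℝ} (hH : Differentiable ℝ H) :
    pT (fun x t => H (ε*(x-t), ε^3*t)) = fun x t => dv (-ε,ε^3) H (ε*(x-t), ε^3*t) :=
  funext fun x => funext fun t => (hasDeriv_chainT hH ε x t).deriv

lemma stepX (ε : ℝ) {H : ℝ × ℝ → ℝ} (hH : Differentiable ℝ H) (c : ℝ) :
    dv (ε,0) (fun q => c * H q) = fun q => (c*ε) * dv (1,0) H q := by
  funext q
  rw [dv_cmul hH, dv_expand]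
  ring

lemma stepT (ε : ℝ) {H : ℝ × ℝ → ℝ} (hH : Differentiable ℝ H) (c : ℝ) :
    dv (-ε,ε^3) (fun q => c * H q)
      = fun q => (c*(-ε)) * dv (1,0) H q + (c*ε^3) * dv (0,1) H q := by
  funext q
  rw [dv_cmul hH, show ((-ε, ε^3) : ℝ × ℝ) = (-ε, ε^3) from rfl, dv_expand]
  ring

lemma stepT2 (ε : ℝ) {H1 H2 : ℝ × ℝ → ℝ} (h1 : Differentiable ℝ H1)
    (h2 : Differentiable ℝ H2) (c1 c2 : ℝ) :
    dv (-ε,ε^3) (fun q => c1 * H1 q + c2 * H2 q)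
      = fun q => (c1*(-ε)) * dv (1,0) H1 q + (c1*ε^3) * dv (0,1) H1 q
        + (c2*(-ε)) * dv (1,0) H2 q + (c2*ε^3) * dv (0,1) H2 q := by
  funext q
  rw [dv_combo h1 h2, dv_expand (H := H1), dv_expand (H := H2)]
  ring

lemma main_residual (ε : ℝ) (F : ℝ × ℝ → ℝ) (hF : ContDiff ℝ (⊤ : ℕ∞) F)
    (hK : ∀ p, dv (0,1) F p = (1/2) * dv (1,0) (dv (1,0) (dv (1,0) F)) p
      + (-(1/2)) * dv (1,0) (fun q => (F q)^2) p)
    (u : ℝ → ℝ → ℝ) (hu : ∀ x t, u x t = ε^2 * F (ε*(x - t), ε^3*t)) :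
    ∀ x t, Res u x t = -(ε^8) * dv (0,1) (dv (0,1) F) (ε*(x - t), ε^3*t) := by
  intro x t
  have hFd : Differentiable ℝ F := hF.differentiable (by simp)
  have hGs : ContDiff ℝ (⊤ : ℕ∞) (fun q : ℝ × ℝ => (F q)^2) := hF.pow 2
  have hGd : Differentiable ℝ (fun q : ℝ × ℝ => (F q)^2) := hGs.differentiable (by simp)
  -- smoothness of iterated derivatives
  have sF1 : ContDiff ℝ (⊤ : ℕ∞) (dv (1,0) F) := smooth_dv _ hF
  have sF2 : ContDiff ℝ (⊤ : ℕ∞) (dv (0,1) F) := smooth_dv _ hF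
  have sF11 : ContDiff ℝ (⊤ : ℕ∞) (dv (1,0) (dv (1,0) F)) := smooth_dv _ sF1
  have sF111 : ContDiff ℝ (⊤ : ℕ∞) (dv (1,0) (dv (1,0) (dv (1,0) F))) := smooth_dv _ sF11
  have sG1 : ContDiff ℝ (⊤ : ℕ∞) (dv (1,0) (fun q : ℝ × ℝ => (F q)^2)) := smooth_dv _ hGs
  have dF1 := sF1.differentiable (by simp)
  have dF2 := sF2.differentiable (by simp)
  have dF11 := sF11.differentiable (by simp)
  have dF111 := sF111.differentiable (by simp)
  have dG1 := sG1.differentiable (by simp)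
  have hK0s : ContDiff ℝ (⊤ : ℕ∞) (fun q : ℝ × ℝ => ε^2 * F q) := contDiff_const.mul hF
  have hK0d : Differentiable ℝ (fun q : ℝ × ℝ => ε^2 * F q) := hK0s.differentiable (by simp)
  have hK4s : ContDiff ℝ (⊤ : ℕ∞) (fun q : ℝ × ℝ => ε^4 * (F q)^2) := contDiff_const.mul hGs
  have hK4d : Differentiable ℝ (fun q : ℝ × ℝ => ε^4 * (F q)^2) := hK4s.differentiable (by simp)
  -- u as a composite
  have e0 : u = fun a b => (fun q : ℝ × ℝ => ε^2 * F q) (ε*(a - b), ε^3*b) :=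
    funext fun a => funext fun b => hu a b
  -- T-derivatives
  have t1 : pT u = fun a b => dv (-ε,ε^3) (fun q => ε^2 * F q) (ε*(a - b), ε^3*b) := by
    rw [e0]; exact compT ε hK0d
  have t2 : pT (pT u)
      = fun a b => dv (-ε,ε^3) (dv (-ε,ε^3) (fun q => ε^2 * F q)) (ε*(a - b), ε^3*b) := by
    rw [t1]; exact compT ε ((smooth_dv _ hK0s).differentiable (by simp))
  -- X-derivatives
  have x1 : pX u = fun a b => dv (ε,0) (fun q => ε^2 * F q) (ε*(a - b), ε^3*b) := by
    rw [e0]; exact compX ε hK0d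
  have x2 : pX (pX u)
      = fun a b => dv (ε,0) (dv (ε,0) (fun q => ε^2 * F q)) (ε*(a - b), ε^3*b) := by
    rw [x1]; exact compX ε ((smooth_dv _ hK0s).differentiable (by simp))
  have x3 : pX (pX (pX u))
      = fun a b => dv (ε,0) (dv (ε,0) (dv (ε,0) (fun q => ε^2 * F q))) (ε*(a - b), ε^3*b) := by
    rw [x2]; exact compX ε ((smooth_dv _ (smooth_dv _ hK0s)).differentiable (by simp))
  have x4 : pX (pX (pX (pX u)))
      = fun a b => dv (ε,0) (dv (ε,0) (dv (ε,0) (dv (ε,0) (fun q => ε^2 * F q))))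
          (ε*(a - b), ε^3*b) := by
    rw [x3]; exact compX ε ((smooth_dv _ (smooth_dv _ (smooth_dv _ hK0s))).differentiable (by simp))
  -- square term
  have gsq : (fun y s => (u y s)^2)
      = fun a b => (fun q : ℝ × ℝ => ε^4 * (F q)^2) (ε*(a - b), ε^3*b) := by
    funext a b
    show (u a b)^2 = ε^4 * (F (ε*(a - b), ε^3*b))^2
    rw [hu]; ring
  have g1 : pX (fun y s => (u y s)^2)
      = fun a b => dv (ε,0) (fun q => ε^4 * (F q)^2) (ε*(a - b), ε^3*b) := by
    rw [gsq]; exact compX ε hK4d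
  have g2 : pX (pX (fun y s => (u y s)^2))
      = fun a b => dv (ε,0) (dv (ε,0) (fun q => ε^4 * (F q)^2)) (ε*(a - b), ε^3*b) := by
    rw [g1]; exact compX ε ((smooth_dv _ hK4s).differentiable (by simp))
  -- expansion of the directional derivatives
  have sT1 : dv (-ε,ε^3) (fun q => ε^2 * F q)
      = fun q => (ε^2*(-ε)) * dv (1,0) F q + (ε^2*ε^3) * dv (0,1) F q := stepT ε hFd (ε^2)
  have sT2 : dv (-ε,ε^3) (fun q => (ε^2*(-ε)) * dv (1,0) F q + (ε^2*ε^3) * dv (0,1) F q)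
      = fun q => ((ε^2*(-ε))*(-ε)) * dv (1,0) (dv (1,0) F) q
        + ((ε^2*(-ε))*ε^3) * dv (0,1) (dv (1,0) F) q
        + ((ε^2*ε^3)*(-ε)) * dv (1,0) (dv (0,1) F) q
        + ((ε^2*ε^3)*ε^3) * dv (0,1) (dv (0,1) F) q :=
    stepT2 ε dF1 dF2 _ _
  have sX1 : dv (ε,0) (fun q => ε^2 * F q) = fun q => (ε^2*ε) * dv (1,0) F q :=
    stepX ε hFd (ε^2)
  have sX2 : dv (ε,0) (fun q => (ε^2*ε) * dv (1,0) F q)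
      = fun q => ((ε^2*ε)*ε) * dv (1,0) (dv (1,0) F) q := stepX ε dF1 _
  have sX3 : dv (ε,0) (fun q => ((ε^2*ε)*ε) * dv (1,0) (dv (1,0) F) q)
      = fun q => (((ε^2*ε)*ε)*ε) * dv (1,0) (dv (1,0) (dv (1,0) F)) q := stepX ε dF11 _
  have sX4 : dv (ε,0) (fun q => (((ε^2*ε)*ε)*ε) * dv (1,0) (dv (1,0) (dv (1,0) F)) q)
      = fun q => ((((ε^2*ε)*ε)*ε)*ε) * dv (1,0) (dv (1,0) (dv (1,0) (dv (1,0) F))) q :=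
    stepX ε dF111 _
  have sGX1 : dv (ε,0) (fun q => ε^4 * (F q)^2)
      = fun q => (ε^4*ε) * dv (1,0) (fun q : ℝ × ℝ => (F q)^2) q := stepX ε hGd (ε^4)
  have sGX2 : dv (ε,0) (fun q => (ε^4*ε) * dv (1,0) (fun q : ℝ × ℝ => (F q)^2) q)
      = fun q => ((ε^4*ε)*ε) * dv (1,0) (dv (1,0) (fun q : ℝ × ℝ => (F q)^2)) q :=
    stepX ε dG1 _
  -- symmetry and KdV substitution
  have hb : dv (0,1) (dv (1,0) F) (ε*(x - t), ε^3*t)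
      = dv (1,0) (dv (0,1) F) (ε*(x - t), ε^3*t) := dv_symm hF _
  have hK' : dv (0,1) F = fun q => (1/2) * dv (1,0) (dv (1,0) (dv (1,0) F)) q
      + (-(1/2)) * dv (1,0) (fun q' : ℝ × ℝ => (F q')^2) q := funext hK
  have hsub : dv (1,0) (dv (0,1) F) (ε*(x - t), ε^3*t)
      = (1/2) * dv (1,0) (dv (1,0) (dv (1,0) (dv (1,0) F))) (ε*(x - t), ε^3*t)
        + (-(1/2)) * dv (1,0) (dv (1,0) (fun q : ℝ × ℝ => (F q)^2)) (ε*(x - t), ε^3*t) := by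
    rw [hK']; exact dv_combo dF111 dG1 _ _ _ _
  show -(pT (pT u) x t) + pX (pX u) x t - pX (pX (pX (pX u))) x t
      + pX (pX (fun y s => (u y s)^2)) x t
      = -(ε^8) * dv (0,1) (dv (0,1) F) (ε*(x - t), ε^3*t)
  rw [t2, x4, x2, g2]
  simp only [sT1, sT2, sX1, sX2, sX3, sX4, sGX1, sGX2]
  rw [hb, hsub]
  ring

/-- For the KdV approximation `u(x,t) = ε² A(ε(x-t), ε³ t)` with `A` a solution of the
KdV equation `∂_T A = (1/2)∂_X³A - (1/2)∂_X(A²)`, the residual equals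
`-ε⁸ (∂_T² A)(ε(x-t), ε³ t)`. -/
theorem kdv_residual (A : ℝ → ℝ → ℝ) (ε : ℝ) (hε : 0 < ε)
    (hA : ContDiff ℝ (⊤ : ℕ∞) (Function.uncurry A))
    (hKdV : ∀ X T, pT A X T =
      (1/2) * pX (pX (pX A)) X T - (1/2) * pX (fun y s => (A y s)^2) X T)
    (u : ℝ → ℝ → ℝ) (hu : ∀ x t, u x t = ε^2 * A (ε*(x - t)) (ε^3*t)) :
    ∀ x t, Res u x t = -(ε^8) * pT (pT A) (ε*(x - t)) (ε^3*t) := by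
  have hF : ContDiff ℝ (⊤ : ℕ∞) (Function.uncurry A) := hA
  have hFd : Differentiable ℝ (Function.uncurry A) := hF.differentiable (by simp)
  have hGd : Differentiable ℝ (fun q : ℝ × ℝ => (Function.uncurry A q)^2) :=
    (hF.pow 2).differentiable (by simp)
  have dF1 : Differentiable ℝ (dv (1,0) (Function.uncurry A)) :=
    (smooth_dv _ hF).differentiable (by simp)
  have dF2 : Differentiable ℝ (dv (0,1) (Function.uncurry A)) :=
    (smooth_dv _ hF).differentiable (by simp)
  have dF11 : Differentiable ℝ (dv (1,0) (dv (1,0) (Function.uncurry A))) :=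
    (smooth_dv _ (smooth_dv _ hF)).differentiable (by simp)
  -- translation of pX/pT on A into dv form
  have hA2 : pX A = fun a b => dv (1,0) (Function.uncurry A) (a,b) :=
    funext fun a => funext fun b => pX_eq hFd a b
  have hA3 : pX (pX A) = fun a b => dv (1,0) (dv (1,0) (Function.uncurry A)) (a,b) := by
    rw [hA2]; exact funext fun a => funext fun b => pX_eq dF1 a b
  have hA6 : pT A = fun a b => dv (0,1) (Function.uncurry A) (a,b) :=
    funext fun a => funext fun b => pT_eq hFd a b
  -- KdV in dv form
  have hK : ∀ p : ℝ × ℝ, dv (0,1) (Function.uncurry A) p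
      = (1/2) * dv (1,0) (dv (1,0) (dv (1,0) (Function.uncurry A))) p
        + (-(1/2)) * dv (1,0) (fun q => (Function.uncurry A q)^2) p := by
    rintro ⟨X, T⟩
    have h0 := hKdV X T
    have hA1 : pT A X T = dv (0,1) (Function.uncurry A) (X,T) := pT_eq hFd X T
    have hA4 : pX (pX (pX A)) X T
        = dv (1,0) (dv (1,0) (dv (1,0) (Function.uncurry A))) (X,T) := by
      rw [hA3]; exact pX_eq dF11 X T
    have hA5 : pX (fun y s => (A y s)^2) X T
        = dv (1,0) (fun q => (Function.uncurry A q)^2) (X,T) := pX_eq hGd X T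
    rw [hA1, hA4, hA5] at h0
    rw [h0]; ring
  have hmain := main_residual ε (Function.uncurry A) hF hK u (fun x t => hu x t)
  intro x t
  have hA7 : pT (pT A) (ε*(x - t)) (ε^3*t)
      = dv (0,1) (dv (0,1) (Function.uncurry A)) (ε*(x - t), ε^3*t) := by
    rw [hA6]; exact pT_eq dF2 _ _
  rw [hmain x t, hA7]
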